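/- arXiv:1802.03628 — 5 statements merged into one kernel-verified Lean document; each statement's English description precedes it below -/
import Mathlib

section
/- Let S be a finite set of vectors in ℝ^M, let f : ℝ^M → ℝ^m, and let ε > 0. Suppose that for all s, r ∈ S we have |‖f(s) − f(r)‖₂² − ‖s − r‖₂²| ≤ ε. Then for every s ∈ S and every positive integer k ≤ |S|, and for every k-element subset F̂ of S minimizing ∑_{r∈F̂} ‖f(s) − f(r)‖₂² among all k-element subsets of S, and every k-element subset F of S minimizing ∑_{r∈F} ‖s − r‖₂² among all k-element subsets of S, the approximation gap satisfies (1/k)·(∑_{r∈F̂} ‖s − r‖₂² − ∑_{r∈F} ‖s − r‖₂²) ≤ 2ε. -/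
open Finset

/-- **Theorem (top-k approximation gap bound).**
If the embedding `f` approximates squared Euclidean distances uniformly within `ε` on `S`,
then the top-k approximation gap is at most `2ε`. -/
theorem topk_gap_bound {M m : ℕ} (S : Finset (EuclideanSpace ℝ (Fin M)))
    (f : EuclideanSpace ℝ (Fin M) → EuclideanSpace ℝ (Fin m)) (ε : ℝ) (hε : 0 < ε)
    (happrox : ∀ s ∈ S, ∀ r ∈ S, |‖f s - f r‖ ^ 2 - ‖s - r‖ ^ 2| ≤ ε)
    (s : EuclideanSpace ℝ (Fin M)) (hs : s ∈ S)
    (k : ℕ) (hk : 0 < k) (hkS : k ≤ S.card)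
    (Fhat : Finset (EuclideanSpace ℝ (Fin M))) (hFhatS : Fhat ⊆ S) (hFhatcard : Fhat.card = k)
    (hFhatmin : ∀ S' ⊆ S, S'.card = k →
      ∑ r ∈ Fhat, ‖f s - f r‖ ^ 2 ≤ ∑ r ∈ S', ‖f s - f r‖ ^ 2)
    (F : Finset (EuclideanSpace ℝ (Fin M))) (hFS : F ⊆ S) (hFcard : F.card = k)
    (hFmin : ∀ S' ⊆ S, S'.card = k →
      ∑ r ∈ F, ‖s - r‖ ^ 2 ≤ ∑ r ∈ S', ‖s - r‖ ^ 2) :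
    (1 / (k : ℝ)) * (∑ r ∈ Fhat, ‖s - r‖ ^ 2 - ∑ r ∈ F, ‖s - r‖ ^ 2) ≤ 2 * ε := by
  have h1 : ∑ r ∈ Fhat, ‖s - r‖ ^ 2 ≤ ∑ r ∈ Fhat, ‖f s - f r‖ ^ 2 + k * ε := by
    calc ∑ r ∈ Fhat, ‖s - r‖ ^ 2 ≤ ∑ r ∈ Fhat, (‖f s - f r‖ ^ 2 + ε) := by
          apply Finset.sum_le_sum
          intro r hr
          have := happrox s hs r (hFhatS hr)
          have := abs_le.mp this
          linarith [this.1]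
      _ = ∑ r ∈ Fhat, ‖f s - f r‖ ^ 2 + k * ε := by
          rw [Finset.sum_add_distrib, Finset.sum_const, hFhatcard, nsmul_eq_mul]
  have h2 : ∑ r ∈ Fhat, ‖f s - f r‖ ^ 2 ≤ ∑ r ∈ F, ‖f s - f r‖ ^ 2 :=
    hFhatmin F hFS hFcard
  have h3 : ∑ r ∈ F, ‖f s - f r‖ ^ 2 ≤ ∑ r ∈ F, ‖s - r‖ ^ 2 + k * ε := by
    calc ∑ r ∈ F, ‖f s - f r‖ ^ 2 ≤ ∑ r ∈ F, (‖s - r‖ ^ 2 + ε) := by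
          apply Finset.sum_le_sum
          intro r hr
          have := abs_le.mp (happrox s hs r (hFS hr))
          linarith [this.2]
      _ = ∑ r ∈ F, ‖s - r‖ ^ 2 + k * ε := by
          rw [Finset.sum_add_distrib, Finset.sum_const, hFcard, nsmul_eq_mul]
  have hkpos : (0 : ℝ) < k := by exact_mod_cast hk
  rw [div_mul_eq_mul_div, one_mul, div_le_iff₀ hkpos]
  nlinarith
end

section
/- Let S be a finite set of vectors in ℝ^M, let f : ℝ^M → ℝ^m, let d : ℝ^m × ℝ^m → ℝ be an arbitrary function, and let ε > 0. Suppose that for all s, r ∈ S we have |d(f(s), f(r)) − ‖s − r‖₂²| ≤ ε. Then for every s ∈ S and every positive integer k ≤ |S|, for every k-element subset F̂_d of S minimizing ∑_{r∈F̂_d} d(f(s), f(r)) among all k-element subsets of S, and every k-element subset F of S minimizing ∑_{r∈F} ‖s − r‖₂² among all k-element subsets of S, one has (1/k)·(∑_{r∈F̂_d} ‖s − r‖₂² − ∑_{r∈F} ‖s − r‖₂²) ≤ 2ε. -/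
open Finset

/-- **Theorem (top-k approximation gap bound for a general distance `d`).**
If `d ∘ (f × f)` approximates squared Euclidean distances uniformly within `ε` on `S`,
then the top-k approximation gap is at most `2ε`. -/
theorem topk_gap_bound_general {M m : ℕ} (S : Finset (EuclideanSpace ℝ (Fin M)))
    (f : EuclideanSpace ℝ (Fin M) → EuclideanSpace ℝ (Fin m))
    (d : EuclideanSpace ℝ (Fin m) → EuclideanSpace ℝ (Fin m) → ℝ) (ε : ℝ) (hε : 0 < ε)
    (happrox : ∀ s ∈ S, ∀ r ∈ S, |d (f s) (f r) - ‖s - r‖ ^ 2| ≤ ε)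
    (s : EuclideanSpace ℝ (Fin M)) (hs : s ∈ S)
    (k : ℕ) (hk : 0 < k) (hkS : k ≤ S.card)
    (Fhat : Finset (EuclideanSpace ℝ (Fin M))) (hFhatS : Fhat ⊆ S) (hFhatcard : Fhat.card = k)
    (hFhatmin : ∀ S' ⊆ S, S'.card = k →
      ∑ r ∈ Fhat, d (f s) (f r) ≤ ∑ r ∈ S', d (f s) (f r))
    (F : Finset (EuclideanSpace ℝ (Fin M))) (hFS : F ⊆ S) (hFcard : F.card = k)
    (hFmin : ∀ S' ⊆ S, S'.card = k →
      ∑ r ∈ F, ‖s - r‖ ^ 2 ≤ ∑ r ∈ S', ‖s - r‖ ^ 2) :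
    (1 / (k : ℝ)) * (∑ r ∈ Fhat, ‖s - r‖ ^ 2 - ∑ r ∈ F, ‖s - r‖ ^ 2) ≤ 2 * ε := by
  have h1 : ∑ r ∈ Fhat, ‖s - r‖ ^ 2 ≤ ∑ r ∈ Fhat, d (f s) (f r) + k * ε := by
    have : ∑ r ∈ Fhat, ‖s - r‖ ^ 2 ≤ ∑ r ∈ Fhat, (d (f s) (f r) + ε) := by
      apply Finset.sum_le_sum
      intro r hr
      have := happrox s hs r (hFhatS hr)
      have := abs_le.mp this
      linarith [this.2]
    simpa [Finset.sum_add_distrib, hFhatcard, mul_comm] using this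
  have h2 : ∑ r ∈ Fhat, d (f s) (f r) ≤ ∑ r ∈ F, d (f s) (f r) :=
    hFhatmin F hFS hFcard
  have h3 : ∑ r ∈ F, d (f s) (f r) ≤ ∑ r ∈ F, ‖s - r‖ ^ 2 + k * ε := by
    have : ∑ r ∈ F, d (f s) (f r) ≤ ∑ r ∈ F, (‖s - r‖ ^ 2 + ε) := by
      apply Finset.sum_le_sum
      intro r hr
      have := abs_le.mp (happrox s hs r (hFS hr))
      linarith [this.1]
    simpa [Finset.sum_add_distrib, hFcard, mul_comm] using this
  have hkpos : (0 : ℝ) < k := by exact_mod_cast hk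
  rw [one_div, inv_mul_le_iff₀ hkpos]
  nlinarith
end

section
/- Let S be a finite set of vectors in ℝ^M, let f : ℝ^M → ℝ^m, and let ε > 0. Suppose that for all r, s, u ∈ S we have |(‖f(r) − f(s)‖₂² − ‖f(r) − f(u)‖₂²) − (‖r − s‖₂² − ‖r − u‖₂²)| ≤ ε. Then for every s ∈ S and every positive integer k ≤ |S|, for every k-element subset F̂ of S minimizing ∑_{r∈F̂} ‖f(s) − f(r)‖₂² among all k-element subsets of S, and every k-element subset F of S minimizing ∑_{r∈F} ‖s − r‖₂² among all k-element subsets of S, one has (1/k)·(∑_{r∈F̂} ‖s − r‖₂² − ∑_{r∈F} ‖s − r‖₂²) ≤ 2ε. -/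
open Finset

/-- **Corollary (top-k approximation gap bound under order-approximation hypothesis).**
If the embedding `f` approximates differences of squared Euclidean distances uniformly
within `ε` on `S`, then the top-k approximation gap is at most `2ε`. -/
theorem topk_gap_bound_order {M m : ℕ} (S : Finset (EuclideanSpace ℝ (Fin M)))
    (f : EuclideanSpace ℝ (Fin M) → EuclideanSpace ℝ (Fin m)) (ε : ℝ) (hε : 0 < ε)
    (happrox : ∀ r ∈ S, ∀ s ∈ S, ∀ u ∈ S,
      |(‖f r - f s‖ ^ 2 - ‖f r - f u‖ ^ 2) - (‖r - s‖ ^ 2 - ‖r - u‖ ^ 2)| ≤ ε)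
    (s : EuclideanSpace ℝ (Fin M)) (hs : s ∈ S)
    (k : ℕ) (hk : 0 < k) (hkS : k ≤ S.card)
    (Fhat : Finset (EuclideanSpace ℝ (Fin M))) (hFhatS : Fhat ⊆ S) (hFhatcard : Fhat.card = k)
    (hFhatmin : ∀ S' ⊆ S, S'.card = k →
      ∑ r ∈ Fhat, ‖f s - f r‖ ^ 2 ≤ ∑ r ∈ S', ‖f s - f r‖ ^ 2)
    (F : Finset (EuclideanSpace ℝ (Fin M))) (hFS : F ⊆ S) (hFcard : F.card = k)
    (hFmin : ∀ S' ⊆ S, S'.card = k →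
      ∑ r ∈ F, ‖s - r‖ ^ 2 ≤ ∑ r ∈ S', ‖s - r‖ ^ 2) :
    (1 / (k : ℝ)) * (∑ r ∈ Fhat, ‖s - r‖ ^ 2 - ∑ r ∈ F, ‖s - r‖ ^ 2) ≤ 2 * ε := by
  have key : ∀ r ∈ S, |‖f s - f r‖ ^ 2 - ‖s - r‖ ^ 2| ≤ ε := by
    intro r hr
    have := happrox s hs r hr s hs
    simpa using this
  have h1 : ∑ r ∈ Fhat, ‖s - r‖ ^ 2 ≤ ∑ r ∈ Fhat, ‖f s - f r‖ ^ 2 + k * ε := by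
    calc ∑ r ∈ Fhat, ‖s - r‖ ^ 2 ≤ ∑ r ∈ Fhat, (‖f s - f r‖ ^ 2 + ε) := by
          refine Finset.sum_le_sum fun r hr => ?_
          have := key r (hFhatS hr)
          have := abs_le.mp this
          linarith [this.1]
      _ = ∑ r ∈ Fhat, ‖f s - f r‖ ^ 2 + k * ε := by
          rw [Finset.sum_add_distrib, Finset.sum_const, hFhatcard]
          push_cast; ring
  have h2 : ∑ r ∈ Fhat, ‖f s - f r‖ ^ 2 ≤ ∑ r ∈ F, ‖f s - f r‖ ^ 2 :=
    hFhatmin F hFS hFcard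
  have h3 : ∑ r ∈ F, ‖f s - f r‖ ^ 2 ≤ ∑ r ∈ F, ‖s - r‖ ^ 2 + k * ε := by
    calc ∑ r ∈ F, ‖f s - f r‖ ^ 2 ≤ ∑ r ∈ F, (‖s - r‖ ^ 2 + ε) := by
          refine Finset.sum_le_sum fun r hr => ?_
          have := abs_le.mp (key r (hFS hr))
          linarith [this.2]
      _ = ∑ r ∈ F, ‖s - r‖ ^ 2 + k * ε := by
          rw [Finset.sum_add_distrib, Finset.sum_const, hFcard]
          push_cast; ring
  have hkpos : (0 : ℝ) < k := by exact_mod_cast hk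
  rw [div_mul_eq_mul_div, one_mul, div_le_iff₀ hkpos]
  nlinarith
end

section
/- Let S be a finite set of vectors in ℝ^M, let f : ℝ^M → ℝ^m, let d : ℝ^m × ℝ^m → ℝ be an arbitrary function, and fix s ∈ S and a positive integer k ≤ |S|. For r ∈ S define ε_{s,r} = ‖s − r‖₂² − d(f(s), f(r)). Then for every k-element subset F̂_d of S minimizing ∑_{r∈F̂_d} d(f(s), f(r)) among all k-element subsets of S, and every k-element subset F of S minimizing ∑_{r∈F} ‖s − r‖₂² among all k-element subsets of S, the approximation gap satisfies (1/k)·(∑_{r∈F̂_d} ‖s − r‖₂² − ∑_{r∈F} ‖s − r‖₂²) ≤ (1/k)·|∑_{r∈F̂_d} ε_{s,r}| + (1/k)·|∑_{r∈F} ε_{s,r}|. -/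
open Finset

/-- **Lemma (gap bounded by averaged absolute error sums).**
With pointwise errors `ε_{s,r} = ‖s − r‖² − d(f(s), f(r))`, the top-k approximation gap is
bounded by `(1/k)|∑_{r∈F̂_d} ε_{s,r}| + (1/k)|∑_{r∈F} ε_{s,r}|`. -/
theorem topk_gap_le_error_sums {M m : ℕ} (S : Finset (EuclideanSpace ℝ (Fin M)))
    (f : EuclideanSpace ℝ (Fin M) → EuclideanSpace ℝ (Fin m))
    (d : EuclideanSpace ℝ (Fin m) → EuclideanSpace ℝ (Fin m) → ℝ)
    (s : EuclideanSpace ℝ (Fin M)) (hs : s ∈ S)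
    (k : ℕ) (hk : 0 < k) (hkS : k ≤ S.card)
    (Fhat : Finset (EuclideanSpace ℝ (Fin M))) (hFhatS : Fhat ⊆ S) (hFhatcard : Fhat.card = k)
    (hFhatmin : ∀ S' ⊆ S, S'.card = k →
      ∑ r ∈ Fhat, d (f s) (f r) ≤ ∑ r ∈ S', d (f s) (f r))
    (F : Finset (EuclideanSpace ℝ (Fin M))) (hFS : F ⊆ S) (hFcard : F.card = k)
    (hFmin : ∀ S' ⊆ S, S'.card = k →
      ∑ r ∈ F, ‖s - r‖ ^ 2 ≤ ∑ r ∈ S', ‖s - r‖ ^ 2) :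
    (1 / (k : ℝ)) * (∑ r ∈ Fhat, ‖s - r‖ ^ 2 - ∑ r ∈ F, ‖s - r‖ ^ 2) ≤
      (1 / (k : ℝ)) * |∑ r ∈ Fhat, (‖s - r‖ ^ 2 - d (f s) (f r))| +
      (1 / (k : ℝ)) * |∑ r ∈ F, (‖s - r‖ ^ 2 - d (f s) (f r))| := by
  have hd : ∑ r ∈ Fhat, d (f s) (f r) ≤ ∑ r ∈ F, d (f s) (f r) :=
    hFhatmin F hFS hFcard
  have hεhat : ∑ r ∈ Fhat, (‖s - r‖ ^ 2 - d (f s) (f r)) ≤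
      |∑ r ∈ Fhat, (‖s - r‖ ^ 2 - d (f s) (f r))| := le_abs_self _
  have hεF : -(∑ r ∈ F, (‖s - r‖ ^ 2 - d (f s) (f r))) ≤
      |∑ r ∈ F, (‖s - r‖ ^ 2 - d (f s) (f r))| := neg_le_abs _
  have hkpos : (0 : ℝ) ≤ 1 / (k : ℝ) := by positivity
  rw [← mul_add]
  apply mul_le_mul_of_nonneg_left _ hkpos
  have h1 : ∑ r ∈ Fhat, ‖s - r‖ ^ 2 - ∑ r ∈ F, ‖s - r‖ ^ 2 =
      (∑ r ∈ Fhat, (‖s - r‖ ^ 2 - d (f s) (f r)))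
      + (∑ r ∈ Fhat, d (f s) (f r) - ∑ r ∈ F, d (f s) (f r))
      + (-(∑ r ∈ F, (‖s - r‖ ^ 2 - d (f s) (f r)))) := by
    simp [Finset.sum_sub_distrib]
  rw [h1]
  have := add_le_add (add_le_add hεhat (sub_nonpos.mpr hd)) hεF
  linarith
end

section
/- Let M be a positive integer divisible by 4, and let s, r ∈ ℝ^M be vectors with mean zero and unit Euclidean norm (so corr(s, r) = ⟨s, r⟩ = 1 − ‖s − r‖₂²/2). Let 𝐬, 𝐫 ∈ ℂ^M be their scaled discrete Fourier transforms, 𝐬_j = (1/√M)∑_{l=0}^{M−1} s_l e^{−2πi j l/M} for j = 0, …, M−1. Suppose the Fourier coefficients of both s and r are periodic with period M/4, i.e. 𝐬_{j+M/4 mod M} = 𝐬_j and 𝐫_{j+M/4 mod M} = 𝐫_j for all j. Then, with m = M/4, 4·d_m²(𝐬, 𝐫) = 4·∑_{j=1}^{M/4} |𝐬_j − 𝐫_j|² = ‖𝐬 − 𝐫‖₂² = 2 − 2·corr(s, r). Consequently, the optimal size-m embedding for correlation approximation in this setting is f(𝐬) = [2𝐬_1, …, 2𝐬_m], which differs from the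 truncated DFT embedding by a constant factor of 2. -/
/-! Periodicity with period `m = M/4` cuts the `M` Fourier coefficients of `s - r` into four
identical blocks, and the block `𝐮_0, …, 𝐮_{m-1}` may be replaced by `𝐮_1, …, 𝐮_m` since
`𝐮_m = 𝐮_0`; hence `‖𝐬 − 𝐫‖² = 4·d_m²(𝐬, 𝐫)`. Parseval, proved from the orthogonality of the
powers of the `M`-th root of unity `e^{−2πi/M}`, identifies `‖𝐬 − 𝐫‖²` with `‖s − r‖²`, which
is `2 − 2⟨s, r⟩` for unit vectors. -/

open Finset Complex

/-- The scaled discrete Fourier transform of `u ∈ ℝ^M`, indexed by natural numbers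
(it is `M`-periodic in the index, so this agrees with mod-`M` indexing):
`𝐮_j = (1/√M) ∑_{l=0}^{M−1} u_l e^{−2πi j l / M}`. -/
noncomputable def sdftNat {M : ℕ} (u : Fin M → ℝ) : ℕ → ℂ :=
  fun j => (1 / (Real.sqrt M : ℂ)) *
    ∑ l : Fin M, (u l : ℂ) * Complex.exp (-(2 * Real.pi * Complex.I * j * (l : ℕ)) / M)

open Function

lemma Function.Periodic.periodic_of_forall_lt_mod {α : Type*} {f : ℕ → α} {M p : ℕ}
    (hf : Periodic f M) (hM : 0 < M) (h : ∀ j < M, f ((j + p) % M) = f j) : Periodic f p :=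
  fun j => calc
    f (j + p) = f ((j % M + p) % M) := by rw [Nat.mod_add_mod, hf.map_mod_nat]
    _ = f j := by rw [h _ (Nat.mod_lt _ hM), hf.map_mod_nat]

lemma Function.Periodic.sum_range_mul {β : Type*} [AddCommMonoid β] {f : ℕ → β} {m : ℕ}
    (hf : Periodic f m) (n : ℕ) : ∑ j ∈ range (n * m), f j = n • ∑ j ∈ range m, f j := by
  induction n with
  | zero => simp
  | succ n ih =>
    rw [add_mul, one_mul, sum_range_add, ih, succ_nsmul]
    congr 1
    exact sum_congr rfl fun j _ => by rw [add_comm]; exact_mod_cast hf.nat_mul n j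

lemma Function.Periodic.sum_Icc_one_eq_sum_range {β : Type*} [AddCancelCommMonoid β]
    {f : ℕ → β} {m : ℕ} (hf : Periodic f m) :
    ∑ j ∈ Icc 1 m, f j = ∑ j ∈ range m, f j := by
  have hshift : ∑ j ∈ Icc 1 m, f j = ∑ j ∈ range m, f (j + 1) := by
    rw [← Ico_add_one_right_eq_Icc, sum_Ico_eq_sum_range]
    simp only [Nat.add_sub_cancel, add_comm 1]
  rw [hshift, ← add_left_inj (f 0), ← sum_range_succ', sum_range_succ, hf.eq]

lemma geom_sum_eq_ite_of_pow_eq_one {K : Type*} [Field K] [DecidableEq K] {w : K} {n : ℕ}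
    (hw : w ^ n = 1) : ∑ i ∈ range n, w ^ i = if w = 1 then (n : K) else 0 := by
  split_ifs with h
  · simp [h]
  · rw [geom_sum_eq h, hw, sub_self, zero_div]

lemma IsPrimitiveRoot.geom_sum_pow_div_pow {K : Type*} [Field K] {ζ : K} {M : ℕ}
    (hζ : IsPrimitiveRoot ζ M) (l k : Fin M) :
    ∑ j ∈ range M, (ζ ^ (l : ℕ) / ζ ^ (k : ℕ)) ^ j = if l = k then (M : K) else 0 := by
  classical
  have hζ0 : ζ ≠ 0 := hζ.ne_zero (Fin.pos l).ne'
  have hw : (ζ ^ (l : ℕ) / ζ ^ (k : ℕ)) ^ M = 1 := by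
    rw [div_pow, ← pow_mul, ← pow_mul, mul_comm, pow_mul, hζ.pow_eq_one, one_pow,
      mul_comm, pow_mul, hζ.pow_eq_one, one_pow, div_one]
  rw [geom_sum_eq_ite_of_pow_eq_one hw, div_eq_one_iff_eq (pow_ne_zero _ hζ0)]
  exact if_congr ⟨fun h => Fin.ext (hζ.pow_inj l.isLt k.isLt h), fun h => h ▸ rfl⟩ rfl rfl

noncomputable def dftRoot (M : ℕ) : ℂ := exp (-(2 * Real.pi * I) / M)

lemma dftRoot_pow_self (M : ℕ) : dftRoot M ^ M = 1 := by
  rcases eq_or_ne M 0 with rfl | hM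
  · rw [pow_zero]
  · rw [dftRoot, ← exp_nat_mul, mul_div_cancel₀ _ (Nat.cast_ne_zero.2 hM), exp_neg,
      exp_two_pi_mul_I, inv_one]

lemma isPrimitiveRoot_dftRoot {M : ℕ} (hM : M ≠ 0) : IsPrimitiveRoot (dftRoot M) M := by
  simpa [dftRoot, neg_div, exp_neg] using (isPrimitiveRoot_exp M hM).inv

lemma conj_dftRoot (M : ℕ) : starRingEnd ℂ (dftRoot M) = (dftRoot M)⁻¹ := by
  rw [dftRoot, ← exp_conj, ← exp_neg]
  congr 1
  rw [map_div₀, map_neg, map_mul, map_mul, conj_I, conj_ofReal, map_ofNat, map_natCast]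
  ring

section

variable {M : ℕ}

lemma sdftNat_eq_sum_pow (u : Fin M → ℝ) (j : ℕ) :
    sdftNat u j = (Real.sqrt M : ℂ)⁻¹ * ∑ l : Fin M, (u l : ℂ) * (dftRoot M ^ (l : ℕ)) ^ j := by
  rw [sdftNat, one_div]
  congr 1
  refine sum_congr rfl fun l _ => ?_
  rw [dftRoot, ← exp_nat_mul, ← exp_nat_mul]
  ring_nf

lemma periodic_sdftNat (u : Fin M → ℝ) : Periodic (sdftNat u) M := fun j => by
  simp only [sdftNat_eq_sum_pow, pow_add, pow_right_comm _ _ M, dftRoot_pow_self, one_pow, mul_one]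

lemma sdftNat_sub (s r : Fin M → ℝ) (j : ℕ) :
    sdftNat (s - r) j = sdftNat s j - sdftNat r j := by
  simp only [sdftNat_eq_sum_pow, Pi.sub_apply, ofReal_sub, sub_mul, sum_sub_distrib, mul_sub]

lemma sdftNat_mul_conj (u : Fin M → ℝ) (j : ℕ) :
    sdftNat u j * starRingEnd ℂ (sdftNat u j) =
      (M : ℂ)⁻¹ * ∑ l : Fin M, ∑ k : Fin M,
        (u l : ℂ) * u k * (dftRoot M ^ (l : ℕ) / dftRoot M ^ (k : ℕ)) ^ j := by
  have hsqrt : ((Real.sqrt M : ℂ))⁻¹ * (Real.sqrt M : ℂ)⁻¹ = (M : ℂ)⁻¹ := by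
    rw [← mul_inv, ← ofReal_mul, Real.mul_self_sqrt (Nat.cast_nonneg M), ofReal_natCast]
  simp only [sdftNat_eq_sum_pow, map_mul, map_sum, map_inv₀, conj_ofReal, map_pow, conj_dftRoot,
    inv_pow]
  rw [mul_mul_mul_comm, hsqrt, sum_mul_sum]
  congr 1
  refine sum_congr rfl fun l _ => sum_congr rfl fun k _ => ?_
  rw [div_pow, div_eq_mul_inv]
  ring

theorem sum_range_norm_sq_sdftNat (u : Fin M → ℝ) :
    ∑ j ∈ range M, ‖sdftNat u j‖ ^ 2 = ∑ l, u l ^ 2 := by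
  rw [← ofReal_inj]
  push_cast
  calc ∑ j ∈ range M, (‖sdftNat u j‖ : ℂ) ^ 2
      = (M : ℂ)⁻¹ * ∑ l : Fin M, ∑ k : Fin M, (u l : ℂ) * u k *
          ∑ j ∈ range M, (dftRoot M ^ (l : ℕ) / dftRoot M ^ (k : ℕ)) ^ j := by
        simp only [← mul_conj', sdftNat_mul_conj]
        rw [← mul_sum, sum_comm]
        congr 1
        refine sum_congr rfl fun l _ => ?_
        rw [sum_comm]
        simp only [mul_sum]
    _ = ∑ l, (u l : ℂ) ^ 2 := by
        rw [mul_sum]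
        refine sum_congr rfl fun l _ => ?_
        have hM : M ≠ 0 := (Fin.pos l).ne'
        simp only [(isPrimitiveRoot_dftRoot hM).geom_sum_pow_div_pow l, mul_ite, mul_zero,
          sum_ite_eq, mem_univ, if_true]
        field_simp

end

theorem dft_period_four_correlation_general {M : ℕ} (hM : 0 < M) (hM4 : 4 ∣ M)
    (s r : Fin M → ℝ)
    (hs_norm : ∑ j, (s j) ^ 2 = 1) (hr_norm : ∑ j, (r j) ^ 2 = 1)
    (hs_per : ∀ j < M, sdftNat s ((j + M / 4) % M) = sdftNat s j)
    (hr_per : ∀ j < M, sdftNat r ((j + M / 4) % M) = sdftNat r j) :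
    4 * ∑ j ∈ Finset.Icc 1 (M / 4), ‖sdftNat s j - sdftNat r j‖ ^ 2 =
      ∑ j ∈ Finset.range M, ‖sdftNat s j - sdftNat r j‖ ^ 2 ∧
    ∑ j ∈ Finset.range M, ‖sdftNat s j - sdftNat r j‖ ^ 2 =
      2 - 2 * ∑ j, s j * r j ∧
    ∑ j ∈ Finset.Icc 1 (M / 4), ‖2 * sdftNat s j - 2 * sdftNat r j‖ ^ 2 =
      2 - 2 * ∑ j, s j * r j := by
  set f : ℕ → ℝ := fun j => ‖sdftNat s j - sdftNat r j‖ ^ 2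
  have hs_periodic := (periodic_sdftNat s).periodic_of_forall_lt_mod hM hs_per
  have hr_periodic := (periodic_sdftNat r).periodic_of_forall_lt_mod hM hr_per
  have hf : Periodic f (M / 4) := fun j => by simp only [f, hs_periodic j, hr_periodic j]
  have h_blocks : 4 * ∑ j ∈ Icc 1 (M / 4), f j = ∑ j ∈ range M, f j :=
    calc 4 * ∑ j ∈ Icc 1 (M / 4), f j = 4 • ∑ j ∈ range (M / 4), f j := by
          rw [hf.sum_Icc_one_eq_sum_range, nsmul_eq_mul, Nat.cast_ofNat]
      _ = ∑ j ∈ range M, f j := by rw [← hf.sum_range_mul, Nat.mul_div_cancel' hM4]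
  have h_parseval : ∑ j ∈ range M, f j = 2 - 2 * ∑ j, s j * r j := by
    simp only [f, ← sdftNat_sub, sum_range_norm_sq_sdftNat, Pi.sub_apply, sub_sq, sum_add_distrib,
      sum_sub_distrib, hs_norm, hr_norm, mul_assoc, ← mul_sum]
    ring
  refine ⟨h_blocks, h_parseval, ?_⟩
  calc ∑ j ∈ Icc 1 (M / 4), ‖2 * sdftNat s j - 2 * sdftNat r j‖ ^ 2
      = 4 * ∑ j ∈ Icc 1 (M / 4), f j := by
        simp only [f, ← mul_sub, norm_mul, mul_pow, ← mul_sum, Complex.norm_two]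
        norm_num
    _ = 2 - 2 * ∑ j, s j * r j := h_blocks.trans h_parseval

/-- **Example (period-`M/4` Fourier coefficients).**
Let `4 ∣ M`, let `s, r ∈ ℝ^M` have mean zero and unit Euclidean norm (so that
`corr(s, r) = ⟨s, r⟩ = 1 − ‖s − r‖₂²/2`), and suppose the scaled DFT coefficients of `s`
and `r` are periodic with period `M/4` (mod `M`). Then, with `m = M/4`,
`4·d_m²(𝐬, 𝐫) = ‖𝐬 − 𝐫‖₂² = 2 − 2·corr(s, r)`; equivalently, the embedding
`f(𝐬) = [2𝐬_1, …, 2𝐬_m]` (the truncated DFT scaled by the constant factor 2) satisfies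
`∑_{j=1}^m |2𝐬_j − 2𝐫_j|² = 2 − 2·corr(s, r)`. -/
theorem dft_period_four_correlation {M : ℕ} (hM : 0 < M) (hM4 : 4 ∣ M)
    (s r : Fin M → ℝ)
    (hs_mean : ∑ j, s j = 0) (hr_mean : ∑ j, r j = 0)
    (hs_norm : ∑ j, (s j) ^ 2 = 1) (hr_norm : ∑ j, (r j) ^ 2 = 1)
    (hs_per : ∀ j < M, sdftNat s ((j + M / 4) % M) = sdftNat s j)
    (hr_per : ∀ j < M, sdftNat r ((j + M / 4) % M) = sdftNat r j) :
    4 * ∑ j ∈ Finset.Icc 1 (M / 4), ‖sdftNat s j - sdftNat r j‖ ^ 2 =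
      ∑ j ∈ Finset.range M, ‖sdftNat s j - sdftNat r j‖ ^ 2 ∧
    ∑ j ∈ Finset.range M, ‖sdftNat s j - sdftNat r j‖ ^ 2 =
      2 - 2 * ∑ j, s j * r j ∧
    ∑ j ∈ Finset.Icc 1 (M / 4), ‖2 * sdftNat s j - 2 * sdftNat r j‖ ^ 2 =
      2 - 2 * ∑ j, s j * r j :=
  dft_period_four_correlation_general hM hM4 s r hs_norm hr_norm hs_per hr_per
end
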